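/- Fixed points of the consensus proximal ADMM iteration are KKT points: let f_1, …, f_M : ℝ^P → ℝ be differentiable, ρ > 0, L_m > 0, and suppose (θ_1, …, θ_M, ψ_1, …, ψ_M, z) ∈ (ℝ^P)^M × (ℝ^P)^M × ℝ^P is a fixed point of the updates z ↦ (1/M)Σ_{m=1}^M (θ_m + ψ_m/ρ), θ_m ↦ z − (∇f_m(z) + ψ_m)/(ρ + L_m), ψ_m ↦ ψ_m + ρ(θ_m − z). Then (i) primal feasibility holds: θ_m = z for all m; (ii) dual feasibility holds: ψ_m = −∇f_m(z) for all m; and (iii) stationarity holds: Σ_{m=1}^M ∇f_m(z) = 0. -/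
import Mathlib


open scoped Real RealInnerProductSpace

/-- Fixed points of the consensus proximal ADMM iteration are KKT points: if
`(θ_1, …, θ_M, ψ_1, …, ψ_M, z)` is a fixed point of the updates
`z ↦ (1/M)Σ_m (θ_m + ψ_m/ρ)`, `θ_m ↦ z − (∇f_m(z) + ψ_m)/(ρ + L_m)`,
`ψ_m ↦ ψ_m + ρ(θ_m − z)`, then (i) `θ_m = z` for all `m` (primal feasibility),
(ii) `ψ_m = −∇f_m(z)` for all `m` (dual feasibility), and
(iii) `Σ_m ∇f_m(z) = 0` (stationarity). -/
theorem admm_fixed_point_is_kkt {P M : ℕ} (hM : 1 ≤ M)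
    (f : Fin M → EuclideanSpace ℝ (Fin P) → ℝ)
    (hdiff : ∀ m, Differentiable ℝ (f m))
    (ρ : ℝ) (hρ : 0 < ρ)
    (L : Fin M → ℝ) (hL : ∀ m, 0 < L m)
    (θ ψ : Fin M → EuclideanSpace ℝ (Fin P))
    (z : EuclideanSpace ℝ (Fin P))
    (hz : z = (M : ℝ)⁻¹ • ∑ m, (θ m + ρ⁻¹ • ψ m))
    (hθ : ∀ m, θ m = z - (ρ + L m)⁻¹ • (gradient (f m) z + ψ m))
    (hψ : ∀ m, ψ m = ψ m + ρ • (θ m - z)) :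
    (∀ m, θ m = z) ∧
    (∀ m, ψ m = -gradient (f m) z) ∧
    (∑ m, gradient (f m) z = 0) := by
  have hprim : ∀ m, θ m = z := by
    intro m
    have h := hψ m
    have h2 : ρ • (θ m - z) = 0 := by
      have := h.symm
      abel_nf at this ⊢
      linear_combination (norm := module) this
    have h3 : θ m - z = 0 := by
      have := smul_eq_zero.mp h2
      rcases this with h | h
      · exact absurd h hρ.ne'
      · exact h
    exact sub_eq_zero.mp h3
  have hdual : ∀ m, ψ m = -gradient (f m) z := by
    intro m
    have h := hθ m
    rw [hprim m] at h
    have h2 : (ρ + L m)⁻¹ • (gradient (f m) z + ψ m) = 0 := by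
      have : z - (ρ + L m)⁻¹ • (gradient (f m) z + ψ m) = z := h.symm
      linear_combination (norm := module) this.symm
    have hne : (ρ + L m) ≠ 0 := ne_of_gt (by linarith [hL m])
    have h3 : gradient (f m) z + ψ m = 0 := by
      rcases smul_eq_zero.mp h2 with h | h
      · exact absurd (inv_eq_zero.mp h) hne
      · exact h
    rw [add_comm] at h3
    exact eq_neg_of_add_eq_zero_left h3
  refine ⟨hprim, hdual, ?_⟩
  simp only [hprim] at hz
  have hz' : z = (M : ℝ)⁻¹ • ∑ m, (z + ρ⁻¹ • ψ m) := hz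
  have hsum : ∑ m, (z + ρ⁻¹ • ψ m) = (M : ℝ) • z + ρ⁻¹ • ∑ m, ψ m := by
    rw [Finset.sum_add_distrib, Finset.sum_const, Finset.card_univ,
      Fintype.card_fin, ← Finset.smul_sum, ← Nat.cast_smul_eq_nsmul ℝ]
  have hMne : (M : ℝ) ≠ 0 := by positivity
  have hpsi : ∑ m, ψ m = 0 := by
    have h := hz'
    rw [hsum, smul_add, smul_smul, inv_mul_cancel₀ hMne, one_smul] at h
    have h2 : ((M : ℝ)⁻¹ * ρ⁻¹) • ∑ m, ψ m = 0 := by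
      rw [← smul_smul]; linear_combination (norm := module) h.symm
    rcases smul_eq_zero.mp h2 with h3 | h3
    · exact absurd h3 (by positivity)
    · exact h3
  have : ∑ m, gradient (f m) z = -∑ m, ψ m := by
    rw [← Finset.sum_neg_distrib]
    exact Finset.sum_congr rfl fun m _ => by rw [hdual m, neg_neg]
  rw [this, hpsi, neg_zero]
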